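/- arXiv:1603.07172 — 2 statements merged into one kernel-verified Lean document; each statement's English description precedes it below -/
import Mathlib

section
/- Poisson Cramér–Wold device: let (X, Y) be a pair of nonnegative integer-valued random variables, and for p, q ∈ [0,1] let X_p and Y_q be binomial thinnings of X and Y (conditionally on (X,Y), X_p ~ Bin(X, p) and Y_q ~ Bin(Y, q), independent of each other). If for every p, q ∈ [0,1] the sum X_p + Y_q has a Poisson distribution with mean p·μ_X + q·μ_Y, then X and Y are independent Poisson random variables with means μ_X and μ_Y, respectively. -/
set_option maxHeartbeats 1000000


noncomputable section

namespace PCW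

/-- The binomial probability mass function `Bin(N, p)`. -/
def binPMF (N : ℕ) (p : ℝ) (k : ℕ) : ℝ := (N.choose k : ℝ) * p ^ k * (1 - p) ^ (N - k)

/-- The Poisson probability mass function with mean `lam`. -/
def pois (lam : ℝ) (k : ℕ) : ℝ := Real.exp (-lam) * lam ^ k / (Nat.factorial k : ℝ)

/-- The probability mass function of `X_p + Y_q`, where, conditionally on `(X, Y)`
(with joint law `μ`), `X_p ~ Bin(X, p)` and `Y_q ~ Bin(Y, q)` are independent
binomial thinnings. -/
def thinnedSumPMF (μ : ℕ × ℕ → ℝ) (p q : ℝ) (m : ℕ) : ℝ :=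
  ∑' xy : ℕ × ℕ, μ xy * ∑ a ∈ Finset.range (m + 1), binPMF xy.1 p a * binPMF xy.2 q (m - a)

end PCW

/-- If a power series with absolutely summable coefficients vanishes on `(0,1)`,
then all its coefficients vanish. -/
lemma pcw_aux_coeff_zero {a : ℕ → ℝ} (ha : Summable fun n => |a n|)
    (h : ∀ s : ℝ, s ∈ Set.Ioo (0 : ℝ) 1 → ∑' n, a n * s ^ n = 0) : ∀ n, a n = 0 := by
  intro n
  induction n using Nat.strong_induction_on with
  | _ n ih =>
  have hsummul : ∀ s : ℝ, s ∈ Set.Ioo (0 : ℝ) 1 → Summable fun k => a k * s ^ k := by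
    intro s hs
    refine Summable.of_abs (Summable.of_nonneg_of_le (fun k => abs_nonneg _) (fun k => ?_) ha)
    rw [abs_mul]
    have : |s ^ k| ≤ 1 := by
      rw [abs_pow]
      exact pow_le_one₀ (abs_nonneg s) (by rw [abs_of_pos hs.1]; exact hs.2.le)
    calc |a k| * |s ^ k| ≤ |a k| * 1 := by
          exact mul_le_mul_of_nonneg_left this (abs_nonneg _)
      _ = |a k| := mul_one _
  have key : ∀ s : ℝ, s ∈ Set.Ioo (0 : ℝ) 1 → ∑' k, a (k + n) * s ^ k = 0 := by
    intro s hs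
    have hsum := hsummul s hs
    have h0 := h s hs
    rw [← Summable.sum_add_tsum_nat_add n hsum] at h0
    have hz : ∑ i ∈ Finset.range n, a i * s ^ i = 0 :=
      Finset.sum_eq_zero fun i hi => by rw [ih i (Finset.mem_range.mp hi), zero_mul]
    rw [hz, zero_add] at h0
    have hrw : ∑' k, a (k + n) * s ^ (k + n) = s ^ n * ∑' k, a (k + n) * s ^ k := by
      rw [← tsum_mul_left]
      exact tsum_congr fun k => by rw [pow_add]; ring
    rw [hrw] at h0
    exact (mul_eq_zero.mp h0).resolve_left (pow_ne_zero n (ne_of_gt hs.1))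
  -- bound |a n| ≤ s * C for all s ∈ (0,1)
  have habs_shift : Summable fun k => |a (k + n)| := (summable_nat_add_iff n).mpr ha
  set C : ℝ := ∑' k, |a k| with hC
  have hbound : ∀ s : ℝ, s ∈ Set.Ioo (0 : ℝ) 1 → |a n| ≤ s * C := by
    intro s hs
    have hsum : Summable fun k => a (k + n) * s ^ k := by
      refine Summable.of_abs (Summable.of_nonneg_of_le (fun k => abs_nonneg _)
        (fun k => ?_) habs_shift)
      rw [abs_mul]
      have : |s ^ k| ≤ 1 := by
        rw [abs_pow]
        exact pow_le_one₀ (abs_nonneg s) (by rw [abs_of_pos hs.1]; exact hs.2.le)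
      calc |a (k + n)| * |s ^ k| ≤ |a (k + n)| * 1 :=
            mul_le_mul_of_nonneg_left this (abs_nonneg _)
        _ = |a (k + n)| := mul_one _
    have h0 := key s hs
    rw [← Summable.sum_add_tsum_nat_add 1 hsum] at h0
    simp only [Finset.range_one, Finset.sum_singleton, pow_zero, mul_one, Nat.zero_add] at h0
    have han : a n = -∑' k, a (k + 1 + n) * s ^ (k + 1) := by linarith
    have habs_shift2 : Summable fun k => |a (k + 1 + n)| := by
      have := (summable_nat_add_iff 1).mpr habs_shift
      simpa using this
    have hterm_sum : Summable fun k => |a (k + 1 + n) * s ^ (k + 1)| := by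
      refine Summable.of_nonneg_of_le (fun k => abs_nonneg _) (fun k => ?_) habs_shift2
      rw [abs_mul]
      have : |s ^ (k + 1)| ≤ 1 := by
        rw [abs_pow]
        exact pow_le_one₀ (abs_nonneg s) (by rw [abs_of_pos hs.1]; exact hs.2.le)
      calc |a (k + 1 + n)| * |s ^ (k + 1)| ≤ |a (k + 1 + n)| * 1 :=
            mul_le_mul_of_nonneg_left this (abs_nonneg _)
        _ = _ := mul_one _
    have h1 : |a n| ≤ ∑' k, |a (k + 1 + n) * s ^ (k + 1)| := by
      rw [han, abs_neg]
      have := norm_tsum_le_tsum_norm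
        (hterm_sum.congr fun k => (Real.norm_eq_abs _).symm)
      simpa only [Real.norm_eq_abs] using this
    have h2 : ∑' k, |a (k + 1 + n) * s ^ (k + 1)| ≤ ∑' k, s * |a (k + 1 + n)| := by
      refine Summable.tsum_le_tsum (fun k => ?_) hterm_sum (habs_shift2.mul_left s)
      rw [abs_mul, mul_comm]
      refine mul_le_mul_of_nonneg_right ?_ (abs_nonneg _)
      rw [abs_pow, abs_of_pos hs.1]
      calc s ^ (k + 1) ≤ s ^ 1 :=
            pow_le_pow_of_le_one hs.1.le hs.2.le (by omega)
        _ = s := pow_one s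
    have h3 : ∑' k, s * |a (k + 1 + n)| = s * ∑' k, |a (k + 1 + n)| := tsum_mul_left
    have h4 : ∑' k, |a (k + 1 + n)| ≤ C := by
      have heq := Summable.sum_add_tsum_nat_add (f := fun k => |a k|) (n + 1) ha
      have hfin : 0 ≤ ∑ i ∈ Finset.range (n + 1), |a i| :=
        Finset.sum_nonneg fun i _ => abs_nonneg _
      have : (∑' k, |a (k + (n + 1))|) ≤ C := by rw [hC, ← heq]; linarith
      simpa [show ∀ k, k + 1 + n = k + (n + 1) by omega] using this
    calc |a n| ≤ ∑' k, |a (k + 1 + n) * s ^ (k + 1)| := h1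
      _ ≤ ∑' k, s * |a (k + 1 + n)| := h2
      _ = s * ∑' k, |a (k + 1 + n)| := h3
      _ ≤ s * C := mul_le_mul_of_nonneg_left h4 hs.1.le
  -- conclude a n = 0
  by_contra hne
  have hCpos : 0 ≤ C := tsum_nonneg fun k => abs_nonneg _
  have habspos : 0 < |a n| := abs_pos.mpr hne
  set s : ℝ := min (1 / 2) (|a n| / (2 * (C + 1))) with hs
  have hspos : 0 < s := lt_min (by norm_num) (by positivity)
  have hslt : s < 1 := lt_of_le_of_lt (min_le_left _ _) (by norm_num)
  have hb := hbound s ⟨hspos, hslt⟩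
  have hsle : s ≤ |a n| / (2 * (C + 1)) := min_le_right _ _
  have h5 : s * (C + 1) ≤ |a n| / 2 := by
    have h6 : s * (C + 1) ≤ (|a n| / (2 * (C + 1))) * (C + 1) :=
      mul_le_mul_of_nonneg_right hsle (by positivity)
    have h7 : (|a n| / (2 * (C + 1))) * (C + 1) = |a n| / 2 := by
      field_simp
    linarith
  have h8 : s * C ≤ s * (C + 1) :=
    mul_le_mul_of_nonneg_left (by linarith) hspos.le
  linarith

open PCW in
/-- **Poisson Cramér–Wold device**: let `(X, Y)` be a pair of `ℕ`-valued random
variables with joint law `μ`.  If for all `p, q ∈ [0,1]` the thinned sum `X_p + Y_q`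
has a Poisson distribution with mean `p·μX + q·μY`, then `X` and `Y` are independent
Poisson random variables with means `μX` and `μY`. -/
theorem poisson_cramer_wold (μ : ℕ × ℕ → ℝ) (hμ0 : ∀ xy, 0 ≤ μ xy)
    (hμ1 : ∑' xy : ℕ × ℕ, μ xy = 1) (μX μY : ℝ) (hμX : 0 ≤ μX) (hμY : 0 ≤ μY)
    (h : ∀ p q : ℝ, p ∈ Set.Icc (0 : ℝ) 1 → q ∈ Set.Icc (0 : ℝ) 1 →
      ∀ m : ℕ, thinnedSumPMF μ p q m = pois (p * μX + q * μY) m) :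
    ∀ x y : ℕ, μ (x, y) = pois μX x * pois μY y := by
  classical
  -- basic facts
  have exp_tsum : ∀ y : ℝ, ∑' n : ℕ, y ^ n / (Nat.factorial n : ℝ) = Real.exp y := by
    intro y
    rw [Real.exp_eq_exp_ℝ, NormedSpace.exp_eq_tsum_div]
  have hpois_nonneg : ∀ lam : ℝ, 0 ≤ lam → ∀ k, 0 ≤ pois lam k := by
    intro lam hl k; unfold pois; positivity
  have hpois_summable : ∀ lam : ℝ, Summable (pois lam) := by
    intro lam
    have : Summable fun k : ℕ => lam ^ k / (Nat.factorial k : ℝ) :=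
      Real.summable_pow_div_factorial lam
    have := this.mul_left (Real.exp (-lam))
    refine this.congr fun k => ?_
    unfold pois; ring
  have hμsum : Summable μ := by
    by_contra hns
    rw [tsum_eq_zero_of_not_summable hns] at hμ1
    norm_num at hμ1
  set P : ℕ × ℕ → ℝ := fun xy => pois μX xy.1 * pois μY xy.2 with hP
  have hP0 : ∀ xy, 0 ≤ P xy := fun xy =>
    mul_nonneg (hpois_nonneg μX hμX _) (hpois_nonneg μY hμY _)
  have hPsum : Summable P := by
    rw [summable_prod_of_nonneg hP0]
    constructor
    · intro x; exact ((hpois_summable μY).mul_left (pois μX x)).congr fun y => rfl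
    · refine ((hpois_summable μX).mul_right (∑' y, pois μY y)).congr fun x => ?_
      rw [← tsum_mul_left]
  set d : ℕ × ℕ → ℝ := fun xy => μ xy - P xy with hd
  have hdsum : Summable d := hμsum.sub hPsum
  have hdabs : Summable fun xy => |d xy| := hdsum.abs
  -- pointwise pow bounds
  have hpow_le_one : ∀ u : ℝ, u ∈ Set.Icc (0 : ℝ) 1 → ∀ k : ℕ, u ^ k ≤ 1 :=
    fun u hu k => pow_le_one₀ hu.1 hu.2
  have hpow_nonneg : ∀ u : ℝ, u ∈ Set.Icc (0 : ℝ) 1 → ∀ k : ℕ, 0 ≤ u ^ k :=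
    fun u hu k => pow_nonneg hu.1 k
  -- generating function of μ
  have hμG : ∀ s t : ℝ, s ∈ Set.Icc (0 : ℝ) 1 → t ∈ Set.Icc (0 : ℝ) 1 →
      ∑' xy : ℕ × ℕ, μ xy * (s ^ xy.1 * t ^ xy.2) =
        Real.exp (-((1 - s) * μX + (1 - t) * μY)) := by
    intro s t hs ht
    have hs' : (1 - s) ∈ Set.Icc (0 : ℝ) 1 := ⟨by linarith [hs.2], by linarith [hs.1]⟩
    have ht' : (1 - t) ∈ Set.Icc (0 : ℝ) 1 := ⟨by linarith [ht.2], by linarith [ht.1]⟩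
    have h0 := h (1 - s) (1 - t) hs' ht' 0
    unfold thinnedSumPMF at h0
    have hL : (∑' xy : ℕ × ℕ, μ xy *
        ∑ a ∈ Finset.range (0 + 1), binPMF xy.1 (1 - s) a * binPMF xy.2 (1 - t) (0 - a)) =
        ∑' xy : ℕ × ℕ, μ xy * (s ^ xy.1 * t ^ xy.2) := by
      refine tsum_congr fun xy => ?_
      congr 1
      simp only [zero_add, Finset.range_one, Finset.sum_singleton, Nat.zero_sub]
      unfold binPMF
      simp [Nat.choose_zero_right]
    rw [hL] at h0
    rw [h0]
    unfold pois
    simp [mul_comm]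
  -- generating function of P
  have hpoisG : ∀ lam : ℝ, 0 ≤ lam → ∀ u : ℝ, u ∈ Set.Icc (0 : ℝ) 1 →
      ∑' k : ℕ, pois lam k * u ^ k = Real.exp (-((1 - u) * lam)) := by
    intro lam hl u hu
    have h1 : ∀ k : ℕ, pois lam k * u ^ k =
        Real.exp (-lam) * ((lam * u) ^ k / (Nat.factorial k : ℝ)) := by
      intro k; unfold pois; rw [mul_pow]; ring
    calc ∑' k : ℕ, pois lam k * u ^ k
        = ∑' k : ℕ, Real.exp (-lam) * ((lam * u) ^ k / (Nat.factorial k : ℝ)) :=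
          tsum_congr h1
      _ = Real.exp (-lam) * ∑' k : ℕ, (lam * u) ^ k / (Nat.factorial k : ℝ) := tsum_mul_left
      _ = Real.exp (-lam) * Real.exp (lam * u) := by rw [exp_tsum]
      _ = Real.exp (-((1 - u) * lam)) := by rw [← Real.exp_add]; ring_nf
  have hPG : ∀ s t : ℝ, s ∈ Set.Icc (0 : ℝ) 1 → t ∈ Set.Icc (0 : ℝ) 1 →
      ∑' xy : ℕ × ℕ, P xy * (s ^ xy.1 * t ^ xy.2) =
        Real.exp (-((1 - s) * μX + (1 - t) * μY)) := by
    intro s t hs ht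
    have hfsum : Summable fun xy : ℕ × ℕ => P xy * (s ^ xy.1 * t ^ xy.2) := by
      refine Summable.of_nonneg_of_le
        (fun xy => mul_nonneg (hP0 xy)
          (mul_nonneg (hpow_nonneg s hs _) (hpow_nonneg t ht _)))
        (fun xy => ?_) hPsum
      calc P xy * (s ^ xy.1 * t ^ xy.2) ≤ P xy * 1 := by
            refine mul_le_mul_of_nonneg_left ?_ (hP0 xy)
            calc s ^ xy.1 * t ^ xy.2 ≤ 1 * 1 :=
                  mul_le_mul (hpow_le_one s hs _) (hpow_le_one t ht _)
                    (hpow_nonneg t ht _) zero_le_one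
              _ = 1 := one_mul 1
        _ = P xy := mul_one _
    rw [Summable.tsum_prod hfsum]
    have hinner : ∀ x : ℕ, ∑' y : ℕ, P (x, y) * (s ^ x * t ^ y) =
        (pois μX x * s ^ x) * Real.exp (-((1 - t) * μY)) := by
      intro x
      have : ∀ y : ℕ, P (x, y) * (s ^ x * t ^ y) =
          (pois μX x * s ^ x) * (pois μY y * t ^ y) := by
        intro y; simp only [hP]; ring
      rw [tsum_congr this, tsum_mul_left, hpoisG μY hμY t ht]
    calc ∑' x : ℕ, ∑' y : ℕ, P (x, y) * (s ^ x * t ^ y)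
        = ∑' x : ℕ, (pois μX x * s ^ x) * Real.exp (-((1 - t) * μY)) :=
          tsum_congr hinner
      _ = (∑' x : ℕ, pois μX x * s ^ x) * Real.exp (-((1 - t) * μY)) := tsum_mul_right
      _ = Real.exp (-((1 - s) * μX)) * Real.exp (-((1 - t) * μY)) := by
          rw [hpoisG μX hμX s hs]
      _ = Real.exp (-((1 - s) * μX + (1 - t) * μY)) := by rw [← Real.exp_add]; ring_nf
  -- summability of the d-series
  have hdterm_sum : ∀ s t : ℝ, s ∈ Set.Icc (0 : ℝ) 1 → t ∈ Set.Icc (0 : ℝ) 1 →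
      Summable fun xy : ℕ × ℕ => d xy * (s ^ xy.1 * t ^ xy.2) := by
    intro s t hs ht
    refine Summable.of_abs (Summable.of_nonneg_of_le (fun xy => abs_nonneg _)
      (fun xy => ?_) hdabs)
    rw [abs_mul]
    have hw : |s ^ xy.1 * t ^ xy.2| ≤ 1 := by
      rw [abs_of_nonneg (mul_nonneg (hpow_nonneg s hs _) (hpow_nonneg t ht _))]
      calc s ^ xy.1 * t ^ xy.2 ≤ 1 * 1 :=
            mul_le_mul (hpow_le_one s hs _) (hpow_le_one t ht _)
              (hpow_nonneg t ht _) zero_le_one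
        _ = 1 := one_mul 1
    calc |d xy| * |s ^ xy.1 * t ^ xy.2| ≤ |d xy| * 1 :=
          mul_le_mul_of_nonneg_left hw (abs_nonneg _)
      _ = |d xy| := mul_one _
  -- the generating function of d vanishes
  have hdG : ∀ s t : ℝ, s ∈ Set.Icc (0 : ℝ) 1 → t ∈ Set.Icc (0 : ℝ) 1 →
      ∑' xy : ℕ × ℕ, d xy * (s ^ xy.1 * t ^ xy.2) = 0 := by
    intro s t hs ht
    have hμterm : Summable fun xy : ℕ × ℕ => μ xy * (s ^ xy.1 * t ^ xy.2) := by
      refine Summable.of_nonneg_of_le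
        (fun xy => mul_nonneg (hμ0 xy)
          (mul_nonneg (hpow_nonneg s hs _) (hpow_nonneg t ht _)))
        (fun xy => ?_) hμsum
      calc μ xy * (s ^ xy.1 * t ^ xy.2) ≤ μ xy * 1 := by
            refine mul_le_mul_of_nonneg_left ?_ (hμ0 xy)
            calc s ^ xy.1 * t ^ xy.2 ≤ 1 * 1 :=
                  mul_le_mul (hpow_le_one s hs _) (hpow_le_one t ht _)
                    (hpow_nonneg t ht _) zero_le_one
              _ = 1 := one_mul 1
        _ = μ xy := mul_one _
    have hPterm : Summable fun xy : ℕ × ℕ => P xy * (s ^ xy.1 * t ^ xy.2) := by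
      refine Summable.of_nonneg_of_le
        (fun xy => mul_nonneg (hP0 xy)
          (mul_nonneg (hpow_nonneg s hs _) (hpow_nonneg t ht _)))
        (fun xy => ?_) hPsum
      calc P xy * (s ^ xy.1 * t ^ xy.2) ≤ P xy * 1 := by
            refine mul_le_mul_of_nonneg_left ?_ (hP0 xy)
            calc s ^ xy.1 * t ^ xy.2 ≤ 1 * 1 :=
                  mul_le_mul (hpow_le_one s hs _) (hpow_le_one t ht _)
                    (hpow_nonneg t ht _) zero_le_one
              _ = 1 := one_mul 1
        _ = P xy := mul_one _
    have : ∀ xy : ℕ × ℕ, d xy * (s ^ xy.1 * t ^ xy.2) =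
        μ xy * (s ^ xy.1 * t ^ xy.2) - P xy * (s ^ xy.1 * t ^ xy.2) := by
      intro xy; simp only [hd]; ring
    rw [tsum_congr this, Summable.tsum_sub hμterm hPterm, hμG s t hs ht, hPG s t hs ht, sub_self]
  -- fiber summability facts
  have hfib : ∀ x : ℕ, Summable fun y => |d (x, y)| := fun x => hdabs.prod_factor x
  have houter : Summable fun x => ∑' y, |d (x, y)| :=
    ((summable_prod_of_nonneg fun xy => abs_nonneg _).mp hdabs).2
  -- for each t ∈ (0,1), the coefficients in s vanish
  have hstep1 : ∀ t : ℝ, t ∈ Set.Ioo (0 : ℝ) 1 → ∀ x : ℕ,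
      ∑' y : ℕ, d (x, y) * t ^ y = 0 := by
    intro t ht
    set A : ℕ → ℝ := fun x => ∑' y : ℕ, d (x, y) * t ^ y with hA
    have htIcc : t ∈ Set.Icc (0 : ℝ) 1 := ⟨ht.1.le, ht.2.le⟩
    have hAabs : Summable fun x => |A x| := by
      refine Summable.of_nonneg_of_le (fun x => abs_nonneg _) (fun x => ?_) houter
      have hterm : Summable fun y => |d (x, y) * t ^ y| := by
        refine Summable.of_nonneg_of_le (fun y => abs_nonneg _) (fun y => ?_) (hfib x)
        rw [abs_mul]
        have : |t ^ y| ≤ 1 := by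
          rw [abs_of_nonneg (hpow_nonneg t htIcc y)]; exact hpow_le_one t htIcc y
        calc |d (x, y)| * |t ^ y| ≤ |d (x, y)| * 1 :=
              mul_le_mul_of_nonneg_left this (abs_nonneg _)
          _ = |d (x, y)| := mul_one _
      calc |A x| ≤ ∑' y, |d (x, y) * t ^ y| := by
            have := norm_tsum_le_tsum_norm
              (hterm.congr fun y => (Real.norm_eq_abs _).symm)
            simpa only [Real.norm_eq_abs, hA] using this
        _ ≤ ∑' y, |d (x, y)| := by
            refine Summable.tsum_le_tsum (fun y => ?_) hterm (hfib x)
            rw [abs_mul]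
            have : |t ^ y| ≤ 1 := by
              rw [abs_of_nonneg (hpow_nonneg t htIcc y)]; exact hpow_le_one t htIcc y
            calc |d (x, y)| * |t ^ y| ≤ |d (x, y)| * 1 :=
                  mul_le_mul_of_nonneg_left this (abs_nonneg _)
              _ = |d (x, y)| := mul_one _
    refine pcw_aux_coeff_zero hAabs ?_
    intro s hsIoo
    have hsIcc : s ∈ Set.Icc (0 : ℝ) 1 := ⟨hsIoo.1.le, hsIoo.2.le⟩
    have hdub := hdG s t hsIcc htIcc
    rw [Summable.tsum_prod (hdterm_sum s t hsIcc htIcc)] at hdub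
    have : ∀ x : ℕ, ∑' y : ℕ, d (x, y) * (s ^ x * t ^ y) = A x * s ^ x := by
      intro x
      have h1 : ∀ y : ℕ, d (x, y) * (s ^ x * t ^ y) = (d (x, y) * t ^ y) * s ^ x := by
        intro y; ring
      rw [tsum_congr h1, tsum_mul_right]
    rw [tsum_congr this] at hdub
    exact hdub
  -- now for each x, the coefficients in t vanish
  intro x y
  have hfin : ∀ y : ℕ, d (x, y) = 0 := by
    refine pcw_aux_coeff_zero (hfib x) ?_
    intro t ht
    exact hstep1 t ht x
  have := hfin y
  simp only [hd, hP] at this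
  linarith
end
end

section
/- Poisson Cramér–Wold device for convergence: let (X^(n), Y^(n)) be sequences of nonnegative integer-valued random variables, and for p, q ∈ [0,1] let X_p^(n), Y_q^(n) be their binomial thinnings (conditionally on (X^(n), Y^(n)), X_p^(n) ~ Bin(X^(n), p) and Y_q^(n) ~ Bin(Y^(n), q), independent of each other). If for every p, q ∈ [0,1], X_p^(n) + Y_q^(n) converges in distribution to a Poisson distribution with mean p·μ_X + q·μ_Y, then (X^(n), Y^(n)) converges in distribution to a pair of independent Poisson random variables with means μ_X and μ_Y respectively. -/
noncomputable section

open Filter Set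

namespace PCWAux
open PCW


lemma summable_pow_mul {a : ℕ → ℝ} {C s : ℝ} (h0 : ∀ k, 0 ≤ a k)
    (hC : ∀ k, a k ≤ C) (hs0 : 0 ≤ s) (hs1 : s < 1) :
    Summable (fun k => a k * s ^ k) := by
  refine Summable.of_nonneg_of_le (fun k => mul_nonneg (h0 k) (pow_nonneg hs0 k))
    (fun k => mul_le_mul_of_nonneg_right (hC k) (pow_nonneg hs0 k)) ?_
  exact (summable_geometric_of_lt_one hs0 hs1).mul_left C

lemma gf_shift {a : ℕ → ℝ} {C s : ℝ} (h0 : ∀ k, 0 ≤ a k) (hC : ∀ k, a k ≤ C)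
    (hs0 : 0 ≤ s) (hs1 : s < 1) :
    ∑' k, a k * s ^ k = a 0 + (∑' k, a (k + 1) * s ^ k) * s := by
  rw [Summable.tsum_eq_zero_add (summable_pow_mul h0 hC hs0 hs1), pow_zero, mul_one, ← tsum_mul_right]
  congr 1
  exact tsum_congr fun k => by ring

lemma gf_tail_le {a : ℕ → ℝ} {C s : ℝ} (h0 : ∀ k, 0 ≤ a k) (hC : ∀ k, a k ≤ C)
    (hs0 : 0 ≤ s) (hs1 : s < 1) :
    ∑' k, a (k + 1) * s ^ k ≤ C * (1 - s)⁻¹ := by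
  have hgeo := summable_geometric_of_lt_one hs0 hs1
  calc ∑' k, a (k + 1) * s ^ k ≤ ∑' k, C * s ^ k := by
        refine Summable.tsum_le_tsum (fun k => mul_le_mul_of_nonneg_right (hC _) (pow_nonneg hs0 k))
          (summable_pow_mul (fun k => h0 _) (fun k => hC _) hs0 hs1) (hgeo.mul_left C)
    _ = C * (1 - s)⁻¹ := by rw [tsum_mul_left, tsum_geometric_of_lt_one hs0 hs1]

lemma gf_head_tendsto {a : ℕ → ℝ} {C : ℝ} (h0 : ∀ k, 0 ≤ a k) (hC : ∀ k, a k ≤ C) :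
    Tendsto (fun s : ℝ => ∑' k, a k * s ^ k) (nhdsWithin 0 (Set.Ioo (0:ℝ) (1/2)))
      (nhds (a 0)) := by
  have hC0 : (0:ℝ) ≤ C := le_trans (h0 0) (hC 0)
  have hbound : ∀ s ∈ Set.Ioo (0:ℝ) (1/2),
      |∑' k, a k * s ^ k - a 0| ≤ 2 * C * s := by
    intro s hs
    have hs0 : (0:ℝ) ≤ s := hs.1.le
    have hs1 : s < 1 := hs.2.trans (by norm_num)
    rw [gf_shift h0 hC hs0 hs1, add_sub_cancel_left]
    have htail0 : 0 ≤ ∑' k, a (k + 1) * s ^ k :=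
      tsum_nonneg fun k => mul_nonneg (h0 _) (pow_nonneg hs0 k)
    rw [abs_of_nonneg (mul_nonneg htail0 hs0)]
    have h1 : ∑' k, a (k + 1) * s ^ k ≤ 2 * C := by
      refine le_trans (gf_tail_le h0 hC hs0 hs1) ?_
      have hinv : (1 - s)⁻¹ ≤ 2 := by
        rw [inv_le_comm₀ (by linarith) (by norm_num)]
        linarith [hs.2]
      calc C * (1 - s)⁻¹ ≤ C * 2 := by nlinarith
        _ = 2 * C := by ring
    calc (∑' k, a (k + 1) * s ^ k) * s ≤ (2 * C) * s :=
          mul_le_mul_of_nonneg_right h1 hs0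
      _ = 2 * C * s := rfl
  have h2C : Tendsto (fun s : ℝ => 2 * C * s) (nhdsWithin 0 (Set.Ioo (0:ℝ) (1/2))) (nhds 0) := by
    have : Tendsto (fun s : ℝ => 2 * C * s) (nhds 0) (nhds (2 * C * 0)) :=
      (continuous_const.mul continuous_id).tendsto 0
    simpa using this.mono_left nhdsWithin_le_nhds
  have hz : Tendsto (fun s : ℝ => ∑' k, a k * s ^ k - a 0)
      (nhdsWithin 0 (Set.Ioo (0:ℝ) (1/2))) (nhds 0) := by
    refine squeeze_zero_norm' ?_ h2C
    filter_upwards [self_mem_nhdsWithin] with s hs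
    simpa [Real.norm_eq_abs] using hbound s hs
  have := hz.add_const (a 0)
  simpa using this

lemma gf_head_eq {a b : ℕ → ℝ} {C : ℝ} (h0a : ∀ k, 0 ≤ a k) (hCa : ∀ k, a k ≤ C)
    (h0b : ∀ k, 0 ≤ b k) (hCb : ∀ k, b k ≤ C)
    (heq : ∀ s ∈ Set.Ioo (0:ℝ) 1, ∑' k, a k * s ^ k = ∑' k, b k * s ^ k) :
    a 0 = b 0 := by
  have hne : (nhdsWithin (0:ℝ) (Set.Ioo (0:ℝ) (1/2))).NeBot := by
    rw [← mem_closure_iff_nhdsWithin_neBot, closure_Ioo (by norm_num : (0:ℝ) ≠ 1/2)]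
    exact ⟨le_refl 0, by norm_num⟩
  refine tendsto_nhds_unique ?_ (gf_head_tendsto h0b hCb)
  refine (gf_head_tendsto h0a hCa).congr' ?_
  filter_upwards [self_mem_nhdsWithin] with s hs
  exact heq s ⟨hs.1, hs.2.trans (by norm_num)⟩

lemma gf_unique : ∀ (k : ℕ) (C : ℝ) (a b : ℕ → ℝ), (∀ j, 0 ≤ a j) → (∀ j, a j ≤ C) →
    (∀ j, 0 ≤ b j) → (∀ j, b j ≤ C) →
    (∀ s ∈ Set.Ioo (0:ℝ) 1, ∑' j, a j * s ^ j = ∑' j, b j * s ^ j) → a k = b k := by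
  intro k
  induction k with
  | zero =>
    intro C a b h0a hCa h0b hCb heq
    exact gf_head_eq h0a hCa h0b hCb heq
  | succ k ih =>
    intro C a b h0a hCa h0b hCb heq
    have h0 : a 0 = b 0 := gf_head_eq h0a hCa h0b hCb heq
    have heq' : ∀ s ∈ Set.Ioo (0:ℝ) 1,
        ∑' j, a (j + 1) * s ^ j = ∑' j, b (j + 1) * s ^ j := by
      intro s hs
      have ha := gf_shift h0a hCa hs.1.le hs.2
      have hb := gf_shift h0b hCb hs.1.le hs.2
      have : (∑' j, a (j + 1) * s ^ j) * s = (∑' j, b (j + 1) * s ^ j) * s := by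
        have := heq s hs
        rw [ha, hb, h0] at this
        linarith
      exact mul_right_cancel₀ (ne_of_gt hs.1) this
    exact ih C (fun j => a (j + 1)) (fun j => b (j + 1)) (fun j => h0a _) (fun j => hCa _)
      (fun j => h0b _) (fun j => hCb _) heq'

lemma summable_2d {a : ℕ × ℕ → ℝ} {C s u : ℝ} (h0 : ∀ p, 0 ≤ a p) (hC : ∀ p, a p ≤ C)
    (hs0 : 0 ≤ s) (hs1 : s < 1) (hu0 : 0 ≤ u) (hu1 : u < 1) :
    Summable (fun p : ℕ × ℕ => a p * (s ^ p.1 * u ^ p.2)) := by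
  have hgeo : Summable (fun p : ℕ × ℕ => s ^ p.1 * u ^ p.2) :=
    (summable_geometric_of_lt_one hs0 hs1).mul_of_nonneg
      (summable_geometric_of_lt_one hu0 hu1)
      (fun k => pow_nonneg hs0 k) (fun k => pow_nonneg hu0 k)
  refine Summable.of_nonneg_of_le
    (fun p => mul_nonneg (h0 p) (mul_nonneg (pow_nonneg hs0 _) (pow_nonneg hu0 _)))
    (fun p => mul_le_mul_of_nonneg_right (hC p)
      (mul_nonneg (pow_nonneg hs0 _) (pow_nonneg hu0 _))) (hgeo.mul_left C)

lemma gf2_eq_iterated {a : ℕ × ℕ → ℝ} {C s u : ℝ} (h0 : ∀ p, 0 ≤ a p) (hC : ∀ p, a p ≤ C)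
    (hs0 : 0 ≤ s) (hs1 : s < 1) (hu0 : 0 ≤ u) (hu1 : u < 1) :
    ∑' p : ℕ × ℕ, a p * (s ^ p.1 * u ^ p.2)
      = ∑' x : ℕ, (∑' y : ℕ, a (x, y) * u ^ y) * s ^ x := by
  rw [Summable.tsum_prod (summable_2d h0 hC hs0 hs1 hu0 hu1)]
  refine tsum_congr fun x => ?_
  rw [← tsum_mul_right]
  exact tsum_congr fun y => by ring

lemma gf_unique2 {a b : ℕ × ℕ → ℝ} {C : ℝ} (h0a : ∀ p, 0 ≤ a p) (hCa : ∀ p, a p ≤ C)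
    (h0b : ∀ p, 0 ≤ b p) (hCb : ∀ p, b p ≤ C)
    (heq : ∀ s ∈ Set.Ioo (0:ℝ) 1, ∀ u ∈ Set.Ioo (0:ℝ) 1,
      ∑' p : ℕ × ℕ, a p * (s ^ p.1 * u ^ p.2) = ∑' p : ℕ × ℕ, b p * (s ^ p.1 * u ^ p.2)) :
    ∀ x y, a (x, y) = b (x, y) := by
  have hC0 : (0:ℝ) ≤ C := le_trans (h0a 0) (hCa 0)
  have hrow : ∀ u ∈ Set.Ioo (0:ℝ) 1, ∀ x,
      (∑' y, a (x, y) * u ^ y) = ∑' y, b (x, y) * u ^ y := by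
    intro u hu x
    have hrow_nonneg : ∀ (c : ℕ × ℕ → ℝ), (∀ p, 0 ≤ c p) → ∀ x,
        0 ≤ ∑' y, c (x, y) * u ^ y := fun c h0 x =>
      tsum_nonneg fun y => mul_nonneg (h0 _) (pow_nonneg hu.1.le _)
    have hrow_le : ∀ (c : ℕ × ℕ → ℝ), (∀ p, 0 ≤ c p) → (∀ p, c p ≤ C) → ∀ x,
        (∑' y, c (x, y) * u ^ y) ≤ C * (1 - u)⁻¹ := by
      intro c h0 hle x
      calc ∑' y, c (x, y) * u ^ y ≤ ∑' y : ℕ, C * u ^ y := by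
            refine Summable.tsum_le_tsum (fun y => mul_le_mul_of_nonneg_right (hle _)
              (pow_nonneg hu.1.le y))
              (summable_pow_mul (fun y => h0 _) (fun y => hle _) hu.1.le hu.2) ?_
            exact (summable_geometric_of_lt_one hu.1.le hu.2).mul_left C
        _ = C * (1 - u)⁻¹ := by rw [tsum_mul_left, tsum_geometric_of_lt_one hu.1.le hu.2]
    refine gf_unique x (C * (1 - u)⁻¹) (fun x => ∑' y, a (x, y) * u ^ y)
      (fun x => ∑' y, b (x, y) * u ^ y) (hrow_nonneg a h0a) (hrow_le a h0a hCa)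
      (hrow_nonneg b h0b) (hrow_le b h0b hCb) ?_
    intro s hs
    rw [← gf2_eq_iterated h0a hCa hs.1.le hs.2 hu.1.le hu.2,
      ← gf2_eq_iterated h0b hCb hs.1.le hs.2 hu.1.le hu.2]
    exact heq s hs u hu
  intro x y
  refine gf_unique y C (fun y => a (x, y)) (fun y => b (x, y)) (fun j => h0a _)
    (fun j => hCa _) (fun j => h0b _) (fun j => hCb _) ?_
  intro u hu
  exact hrow u hu x


open PCW

lemma exp_tsum (t : ℝ) : ∑' k : ℕ, t ^ k / (Nat.factorial k : ℝ) = Real.exp t := by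
  rw [Real.exp_eq_exp_ℝ, NormedSpace.exp_eq_tsum_div]

lemma pois_nonneg {lam : ℝ} (h : 0 ≤ lam) (k : ℕ) : 0 ≤ pois lam k := by
  unfold pois
  positivity

lemma pois_le_one {lam : ℝ} (h : 0 ≤ lam) (k : ℕ) : pois lam k ≤ 1 := by
  have hsum : Summable (fun k : ℕ => lam ^ k / (Nat.factorial k : ℝ)) :=
    Real.summable_pow_div_factorial lam
  have hk : lam ^ k / (Nat.factorial k : ℝ) ≤ Real.exp lam := by
    rw [← exp_tsum lam]
    exact Summable.le_tsum hsum k fun j _ => by positivity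
  have : pois lam k ≤ Real.exp (-lam) * Real.exp lam := by
    unfold pois
    rw [mul_div_assoc]
    exact mul_le_mul_of_nonneg_left hk (Real.exp_pos _).le
  simpa [← Real.exp_add] using this

lemma pois_gf {lam : ℝ} (s : ℝ) :
    ∑' k : ℕ, pois lam k * s ^ k = Real.exp (lam * (s - 1)) := by
  have h1 : ∀ k : ℕ, pois lam k * s ^ k
      = Real.exp (-lam) * ((lam * s) ^ k / (Nat.factorial k : ℝ)) := by
    intro k
    unfold pois
    rw [mul_pow]
    ring
  calc ∑' k : ℕ, pois lam k * s ^ k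
      = ∑' k : ℕ, Real.exp (-lam) * ((lam * s) ^ k / (Nat.factorial k : ℝ)) :=
        tsum_congr h1
    _ = Real.exp (-lam) * Real.exp (lam * s) := by rw [tsum_mul_left, exp_tsum]
    _ = Real.exp (lam * (s - 1)) := by rw [← Real.exp_add]; ring_nf

lemma pois_summable_mul {lam s : ℝ} :
    Summable (fun k : ℕ => pois lam k * s ^ k) := by
  have : ∀ k : ℕ, pois lam k * s ^ k
      = Real.exp (-lam) * ((lam * s) ^ k / (Nat.factorial k : ℝ)) := by
    intro k; unfold pois; rw [mul_pow]; ring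
  exact (funext this : _) ▸ ((Real.summable_pow_div_factorial (lam * s)).mul_left _)

lemma pois_prod_gf {lamx lamy : ℝ} (hx : 0 ≤ lamx) (hy : 0 ≤ lamy) {s u : ℝ}
    (hs0 : 0 ≤ s) (hu0 : 0 ≤ u) :
    ∑' p : ℕ × ℕ, (pois lamx p.1 * pois lamy p.2) * (s ^ p.1 * u ^ p.2)
      = Real.exp (lamx * (s - 1) + lamy * (u - 1)) := by
  have hsum : Summable (fun p : ℕ × ℕ =>
      (pois lamx p.1 * s ^ p.1) * (pois lamy p.2 * u ^ p.2)) :=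
    (pois_summable_mul (lam:=lamx) (s:=s)).mul_of_nonneg (pois_summable_mul (lam:=lamy) (s:=u))
      (fun k => mul_nonneg (pois_nonneg hx k) (pow_nonneg hs0 k))
      (fun k => mul_nonneg (pois_nonneg hy k) (pow_nonneg hu0 k))
  have hcongr : ∀ p : ℕ × ℕ, (pois lamx p.1 * pois lamy p.2) * (s ^ p.1 * u ^ p.2)
      = (pois lamx p.1 * s ^ p.1) * (pois lamy p.2 * u ^ p.2) := fun p => by ring
  calc ∑' p : ℕ × ℕ, (pois lamx p.1 * pois lamy p.2) * (s ^ p.1 * u ^ p.2)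
      = ∑' p : ℕ × ℕ, (pois lamx p.1 * s ^ p.1) * (pois lamy p.2 * u ^ p.2) :=
        tsum_congr hcongr
    _ = ∑' x : ℕ, ∑' y : ℕ, (pois lamx x * s ^ x) * (pois lamy y * u ^ y) := by
        rw [Summable.tsum_prod hsum]
    _ = (∑' x : ℕ, pois lamx x * s ^ x) * (∑' y : ℕ, pois lamy y * u ^ y) := by
        rw [← tsum_mul_right]
        exact tsum_congr fun x => by rw [tsum_mul_left]
    _ = Real.exp (lamx * (s - 1) + lamy * (u - 1)) := by
        rw [pois_gf, pois_gf, ← Real.exp_add]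


end PCWAux

open PCWAux


open PCW in
/-- **Poisson Cramér–Wold device for convergence**: let `(X⁽ⁿ⁾, Y⁽ⁿ⁾)` be pairs of
`ℕ`-valued random variables with joint laws `μs n`.  If for all `p, q ∈ [0,1]` the
thinned sums `X_p⁽ⁿ⁾ + Y_q⁽ⁿ⁾` converge in distribution to a Poisson distribution with
mean `p·μX + q·μY`, then `(X⁽ⁿ⁾, Y⁽ⁿ⁾)` converges in distribution to a pair of
independent Poisson random variables with means `μX` and `μY`.  (For `ℕ`-valued
random variables, convergence in distribution is equivalent to pointwise convergence
of the probability mass functions.) -/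
theorem poisson_cramer_wold_convergence (μs : ℕ → ℕ × ℕ → ℝ)
    (hμ0 : ∀ n xy, 0 ≤ μs n xy) (hμ1 : ∀ n, ∑' xy : ℕ × ℕ, μs n xy = 1)
    (μX μY : ℝ) (hμX : 0 ≤ μX) (hμY : 0 ≤ μY)
    (h : ∀ p q : ℝ, p ∈ Set.Icc (0 : ℝ) 1 → q ∈ Set.Icc (0 : ℝ) 1 → ∀ m : ℕ,
      Filter.Tendsto (fun n => thinnedSumPMF (μs n) p q m) Filter.atTop
        (nhds (pois (p * μX + q * μY) m))) :
    ∀ x y : ℕ,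
      Filter.Tendsto (fun n => μs n (x, y)) Filter.atTop
        (nhds (pois μX x * pois μY y)) := by
  classical
  have hsum : ∀ n, Summable (μs n) := by
    intro n
    by_contra hs
    have h1 := hμ1 n
    rw [tsum_eq_zero_of_not_summable hs] at h1
    exact one_ne_zero h1.symm
  have hle1 : ∀ n xy, μs n xy ≤ 1 := by
    intro n xy
    rw [← hμ1 n]
    exact Summable.le_tsum (hsum n) xy fun b _ => hμ0 n b
  -- generating function convergence (at m = 0)
  have hG : ∀ s u : ℝ, 0 ≤ s → s ≤ 1 → 0 ≤ u → u ≤ 1 →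
      Tendsto (fun n => ∑' xy : ℕ × ℕ, μs n xy * (s ^ xy.1 * u ^ xy.2)) atTop
        (nhds (Real.exp (μX * (s - 1) + μY * (u - 1)))) := by
    intro s u hs0 hs1 hu0 hu1
    have h0 := h (1 - s) (1 - u) ⟨by linarith, by linarith⟩ ⟨by linarith, by linarith⟩ 0
    have e1 : ∀ n, thinnedSumPMF (μs n) (1 - s) (1 - u) 0
        = ∑' xy : ℕ × ℕ, μs n xy * (s ^ xy.1 * u ^ xy.2) := by
      intro n
      unfold thinnedSumPMF
      refine tsum_congr fun xy => ?_
      simp [binPMF, Finset.sum_range_one, sub_sub_cancel]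
    have e2 : pois ((1 - s) * μX + (1 - u) * μY) 0 = Real.exp (μX * (s - 1) + μY * (u - 1)) := by
      simp only [pois, pow_zero, Nat.factorial_zero, Nat.cast_one, mul_one, div_one]
      congr 1
      ring
    rw [← e2]
    exact h0.congr e1
  intro x y
  apply Filter.tendsto_of_subseq_tendsto
  intro ns hns
  -- compactness extraction
  let F : ℕ → (ℕ × ℕ → Set.Icc (0:ℝ) 1) := fun n p => ⟨μs (ns n) p, hμ0 _ _, hle1 _ _⟩
  obtain ⟨ν, φ, hφ, hconv⟩ := CompactSpace.tendsto_subseq F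
  have hpt : ∀ p : ℕ × ℕ, Tendsto (fun k => μs (ns (φ k)) p) atTop (nhds (ν p : ℝ)) := by
    intro p
    have := tendsto_pi_nhds.1 hconv p
    exact ((continuous_subtype_val.tendsto (ν p)).comp this : _)
  set νr : ℕ × ℕ → ℝ := fun p => (ν p : ℝ) with hνr
  have h0ν : ∀ p, 0 ≤ νr p := fun p => (ν p).2.1
  have h1ν : ∀ p, νr p ≤ 1 := fun p => (ν p).2.2
  -- gf of the limit point
  have hν_gf : ∀ s ∈ Set.Ioo (0:ℝ) 1, ∀ u ∈ Set.Ioo (0:ℝ) 1,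
      ∑' p : ℕ × ℕ, νr p * (s ^ p.1 * u ^ p.2)
        = Real.exp (μX * (s - 1) + μY * (u - 1)) := by
    intro s hs u hu
    have hbound : Summable (fun p : ℕ × ℕ => s ^ p.1 * u ^ p.2) := by
      have := summable_2d (a := fun _ : ℕ × ℕ => (1:ℝ)) (C := 1)
        (fun _ => zero_le_one) (fun _ => le_refl 1) hs.1.le hs.2 hu.1.le hu.2
      simpa using this
    have hA : Tendsto (fun k => ∑' p : ℕ × ℕ, μs (ns (φ k)) p * (s ^ p.1 * u ^ p.2)) atTop
        (nhds (∑' p : ℕ × ℕ, νr p * (s ^ p.1 * u ^ p.2))) := by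
      refine tendsto_tsum_of_dominated_convergence hbound
        (fun p => (hpt p).mul_const _) ?_
      refine Eventually.of_forall fun k p => ?_
      have h1 : 0 ≤ s ^ p.1 * u ^ p.2 :=
        mul_nonneg (pow_nonneg hs.1.le _) (pow_nonneg hu.1.le _)
      rw [Real.norm_eq_abs, abs_of_nonneg (mul_nonneg (hμ0 _ _) h1)]
      calc μs (ns (φ k)) p * (s ^ p.1 * u ^ p.2) ≤ 1 * (s ^ p.1 * u ^ p.2) :=
            mul_le_mul_of_nonneg_right (hle1 _ _) h1
        _ = s ^ p.1 * u ^ p.2 := one_mul _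
    have hB : Tendsto (fun k => ∑' p : ℕ × ℕ, μs (ns (φ k)) p * (s ^ p.1 * u ^ p.2)) atTop
        (nhds (Real.exp (μX * (s - 1) + μY * (u - 1)))) :=
      (hG s u hs.1.le hs.2.le hu.1.le hu.2.le).comp (hns.comp hφ.tendsto_atTop)
    exact tendsto_nhds_unique hA hB
  -- identify the limit point
  have hkey : ∀ x y, νr (x, y) = pois μX x * pois μY y := by
    refine gf_unique2 (C := 1) (b := fun p : ℕ × ℕ => pois μX p.1 * pois μY p.2) h0ν h1ν
      (fun p => mul_nonneg (pois_nonneg hμX _) (pois_nonneg hμY _))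
      (fun p => mul_le_one₀ (pois_le_one hμX _) (pois_nonneg hμY _) (pois_le_one hμY _)) ?_
    intro s hs u hu
    rw [hν_gf s hs u hu, pois_prod_gf hμX hμY hs.1.le hu.1.le]
  exact ⟨φ, by rw [← hkey x y]; exact hpt (x, y)⟩
end
end
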